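/- arXiv:2407.13407 — 2 statements merged into one kernel-verified Lean document; each statement's English description precedes it below -/
import Mathlib

section
/- Let Y be an n×r real matrix with unit-norm rows Y₁,…,Yₙ. Decompose Y = 𝟏uᵀ + W where u ∈ ℝʳ and Wᵀ𝟏 = 0. Define Q ∈ ℝⁿˣⁿ by Q_{ij} = (1/4)·‖Yᵢ - Yⱼ‖⁴ and a ∈ ℝⁿ by aᵢ = (1/4)·‖Wᵢ‖⁴. Then Q = a𝟏ᵀ + 𝟏aᵀ + Q̃ where the matrix Q̃ satisfies ‖Q̃‖_* ≤ 14·‖W‖_F², with ‖·‖_* the nuclear norm. -/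
/-- Nuclear norm of a real matrix: sum of its singular values, i.e. the square
roots of the eigenvalues of the conjugate-transpose of `M` times `M`. -/
noncomputable def nuclearNorm {n m : ℕ} (M : Matrix (Fin n) (Fin m) ℝ) : ℝ :=
  ∑ i, Real.sqrt ((Matrix.isHermitian_conjTranspose_mul_self M).eigenvalues i)

open Matrix in
lemma euclid_inner_eq {ι : Type*} [Fintype ι] (x y : EuclideanSpace ℝ ι) :
    (inner ℝ x y : ℝ) = ∑ i, x i * y i := by
  simp [PiLp.inner_apply, RCLike.inner_apply, conj_trivial, mul_comm]

lemma euclid_norm_sq {ι : Type*} [Fintype ι] (x : EuclideanSpace ℝ ι) :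
    ‖x‖ ^ 2 = ∑ i, x i ^ 2 := by
  rw [← real_inner_self_eq_norm_sq, euclid_inner_eq]
  simp [sq]

open Matrix in
lemma nuclearNorm_factor_le {n : ℕ} {m : Type*} [Fintype m]
    (A B : Matrix (Fin n) m ℝ) :
    nuclearNorm (A * Bᵀ) ≤
      Real.sqrt (∑ i, ∑ j, A i j ^ 2) * Real.sqrt (∑ i, ∑ j, B i j ^ 2) := by
  classical
  set M : Matrix (Fin n) (Fin n) ℝ := A * Bᵀ with hMdef
  have hH := Matrix.isHermitian_conjTranspose_mul_self M
  set v := hH.eigenvectorBasis with hv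
  set lam := hH.eigenvalues with hlamdef
  -- dot product identity
  have hdot : ∀ x y : Fin n → ℝ, x ⬝ᵥ ((Mᴴ * M) *ᵥ y) = (M *ᵥ x) ⬝ᵥ (M *ᵥ y) := by
    intro x y
    rw [← Matrix.mulVec_mulVec, Matrix.conjTranspose_eq_transpose_of_trivial,
      dotProduct_mulVec, Matrix.vecMul_transpose]
  -- the image vectors, as Euclidean space elements
  set mv : Fin n → EuclideanSpace ℝ (Fin n) :=
    fun i => (WithLp.equiv 2 (Fin n → ℝ)).symm (M *ᵥ ⇑(v i)) with hmv
  have hmv_apply : ∀ i k, mv i k = (M *ᵥ ⇑(v i)) k := fun i k => rfl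
  have hinner_mv : ∀ i j, (inner ℝ (mv i) (mv j) : ℝ) = lam j * (inner ℝ (v i) (v j) : ℝ) := by
    intro i j
    rw [euclid_inner_eq, euclid_inner_eq]
    have h1 : ∑ k, mv i k * mv j k = (M *ᵥ ⇑(v i)) ⬝ᵥ (M *ᵥ ⇑(v j)) := rfl
    rw [h1, ← hdot, hH.mulVec_eigenvectorBasis]
    simp [dotProduct, Finset.mul_sum, mul_comm, mul_left_comm]
    refine Finset.sum_congr rfl fun k _ => ?_
    show (v i) k * ((v j) k * lam j) = lam j * ((v i) k * (v j) k)
    ring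
  have horth := v.orthonormal
  have hvnorm : ∀ i, (inner ℝ (v i) (v i) : ℝ) = 1 := by
    intro i
    rw [real_inner_self_eq_norm_sq, horth.1 i]; norm_num
  have hvorth : ∀ i j, i ≠ j → (inner ℝ (v i) (v j) : ℝ) = 0 := fun i j hij => horth.2 hij
  have hlam_eq : ∀ i, lam i = ‖mv i‖ ^ 2 := by
    intro i
    rw [← real_inner_self_eq_norm_sq, hinner_mv, hvnorm, mul_one]
  have hlam_nonneg : ∀ i, 0 ≤ lam i := fun i => (hlam_eq i).symm ▸ sq_nonneg _
  have hsqrt : ∀ i, Real.sqrt (lam i) = ‖mv i‖ := by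
    intro i
    rw [hlam_eq i, Real.sqrt_sq (norm_nonneg _)]
  -- normalized left singular vectors
  set u : Fin n → EuclideanSpace ℝ (Fin n) := fun i => ‖mv i‖⁻¹ • mv i with hu
  have hu_inner_mv : ∀ i, (inner ℝ (u i) (mv i) : ℝ) = ‖mv i‖ := by
    intro i
    by_cases h : mv i = 0
    · simp [hu, h]
    · have hnz : ‖mv i‖ ≠ 0 := norm_ne_zero_iff.mpr h
      rw [hu]
      simp only [real_inner_smul_left]
      rw [real_inner_self_eq_norm_sq, sq, ← mul_assoc, inv_mul_cancel₀ hnz, one_mul]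
  -- transfer to A, B
  set At : EuclideanSpace ℝ (Fin n) → EuclideanSpace ℝ m :=
    fun x => (WithLp.equiv 2 (m → ℝ)).symm (Aᵀ *ᵥ ⇑x) with hAt
  set Bt : EuclideanSpace ℝ (Fin n) → EuclideanSpace ℝ m :=
    fun x => (WithLp.equiv 2 (m → ℝ)).symm (Bᵀ *ᵥ ⇑x) with hBt
  have hsplit : ∀ i, (inner ℝ (u i) (mv i) : ℝ) = (inner ℝ (At (u i)) (Bt (v i)) : ℝ) := by
    intro i
    rw [euclid_inner_eq, euclid_inner_eq]
    have h1 : ∑ k, u i k * mv i k = ⇑(u i) ⬝ᵥ (M *ᵥ ⇑(v i)) := rfl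
    have h2 : ∑ k, At (u i) k * Bt (v i) k = (Aᵀ *ᵥ ⇑(u i)) ⬝ᵥ (Bᵀ *ᵥ ⇑(v i)) := rfl
    rw [h1, h2, hMdef, ← Matrix.mulVec_mulVec, dotProduct_mulVec, ← Matrix.mulVec_transpose]
  -- Frobenius-type norms of images
  have hParseval : ∀ c : EuclideanSpace ℝ (Fin n), ∑ i, (inner ℝ c (v i) : ℝ) ^ 2 = ‖c‖ ^ 2 := by
    intro c
    have h := v.sum_inner_mul_inner c c
    rw [← real_inner_self_eq_norm_sq, ← h]
    refine Finset.sum_congr rfl fun i _ => ?_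
    rw [real_inner_comm (v i) c, sq]
  have hBt_sq : ∑ i, ‖Bt (v i)‖ ^ 2 = ∑ i, ∑ j, B i j ^ 2 := by
    have hcol : ∀ (j : m) (x : EuclideanSpace ℝ (Fin n)),
        Bt x j = (inner ℝ ((WithLp.equiv 2 (Fin n → ℝ)).symm (fun i => B i j)) x : ℝ) := by
      intro j x
      rw [euclid_inner_eq]
      rfl
    calc ∑ i, ‖Bt (v i)‖ ^ 2 = ∑ i, ∑ j, (Bt (v i) j) ^ 2 := by
          simp_rw [euclid_norm_sq]
      _ = ∑ j : m, ∑ i, (Bt (v i) j) ^ 2 := Finset.sum_comm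
      _ = ∑ j : m, ∑ i, B i j ^ 2 := by
          refine Finset.sum_congr rfl fun j _ => ?_
          simp_rw [hcol]
          rw [hParseval, euclid_norm_sq]
          rfl
      _ = ∑ i, ∑ j, B i j ^ 2 := Finset.sum_comm
  have hAt_sq : ∑ i, ‖At (u i)‖ ^ 2 ≤ ∑ i, ∑ j, A i j ^ 2 := by
    have hcol : ∀ j : m, ∀ x : EuclideanSpace ℝ (Fin n),
        At x j = (inner ℝ ((WithLp.equiv 2 (Fin n → ℝ)).symm (fun i => A i j)) x : ℝ) := by
      intro j x
      rw [euclid_inner_eq]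
      rfl
    have hmain : ∀ j : m, ∑ i, (At (u i) j) ^ 2 ≤ ∑ i, A i j ^ 2 := by
      intro j
      set c : EuclideanSpace ℝ (Fin n) := (WithLp.equiv 2 (Fin n → ℝ)).symm (fun i => A i j) with hc
      -- orthonormal family on nonzero part
      have horthu : Orthonormal ℝ (fun i : {i : Fin n // mv i ≠ 0} => u i.1) := by
        constructor
        · rintro ⟨i, hi⟩
          rw [hu]
          simp only [norm_smul, norm_inv, norm_norm]
          exact inv_mul_cancel₀ (norm_ne_zero_iff.mpr hi)
        · rintro ⟨i, hi⟩ ⟨j', hj⟩ hij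
          have hij' : i ≠ j' := by
            intro h; apply hij; exact Subtype.ext h
          rw [hu]
          simp only [real_inner_smul_left, real_inner_smul_right]
          rw [hinner_mv, hvorth i j' hij']
          ring
      have hbessel := horthu.sum_inner_products_le (s := Finset.univ) c
      have hzero : ∀ i ∈ Finset.univ, i ∉ Finset.univ.filter (fun i => mv i ≠ 0) →
          (At (u i) j) ^ 2 = 0 := by
        intro i _ hi
        simp only [Finset.mem_filter, Finset.mem_univ, true_and, not_not] at hi
        have : u i = 0 := by rw [hu]; simp [hi]
        rw [hcol, this]
        simp
      calc ∑ i, (At (u i) j) ^ 2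
          = ∑ i ∈ Finset.univ.filter (fun i => mv i ≠ 0), (At (u i) j) ^ 2 :=
            (Finset.sum_subset (Finset.filter_subset _ _) hzero).symm
        _ = ∑ i : {i : Fin n // mv i ≠ 0}, (At (u i.1) j) ^ 2 :=
            Finset.sum_subtype _ (fun x => by simp) _
        _ ≤ ‖c‖ ^ 2 := by
            refine le_trans (le_of_eq ?_) hbessel
            refine Finset.sum_congr rfl fun i _ => ?_
            rw [hcol, real_inner_comm]
            rw [Real.norm_eq_abs, sq_abs]
        _ = ∑ i, A i j ^ 2 := by
            rw [euclid_norm_sq]; rfl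
    calc ∑ i, ‖At (u i)‖ ^ 2 = ∑ i, ∑ j, (At (u i) j) ^ 2 := by simp_rw [euclid_norm_sq]
      _ = ∑ j, ∑ i, (At (u i) j) ^ 2 := Finset.sum_comm
      _ ≤ ∑ j, ∑ i, A i j ^ 2 := Finset.sum_le_sum fun j _ => hmain j
      _ = ∑ i, ∑ j, A i j ^ 2 := Finset.sum_comm
  -- main chain
  have hchain : nuclearNorm M = ∑ i, (inner ℝ (At (u i)) (Bt (v i)) : ℝ) := by
    rw [nuclearNorm]
    refine Finset.sum_congr rfl fun i _ => ?_
    rw [← hsplit, hu_inner_mv, ← hsqrt]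
  rw [hchain]
  calc ∑ i, (inner ℝ (At (u i)) (Bt (v i)) : ℝ)
      ≤ ∑ i, ‖At (u i)‖ * ‖Bt (v i)‖ :=
        Finset.sum_le_sum fun i _ => real_inner_le_norm _ _
    _ ≤ Real.sqrt (∑ i, ‖At (u i)‖ ^ 2) * Real.sqrt (∑ i, ‖Bt (v i)‖ ^ 2) :=
        Real.sum_mul_le_sqrt_mul_sqrt _ _ _
    _ ≤ Real.sqrt (∑ i, ∑ j, A i j ^ 2) * Real.sqrt (∑ i, ∑ j, B i j ^ 2) :=
        mul_le_mul (Real.sqrt_le_sqrt hAt_sq) (Real.sqrt_le_sqrt hBt_sq.le)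
          (Real.sqrt_nonneg _) (Real.sqrt_nonneg _)

set_option maxHeartbeats 1000000 in
theorem Q_decomposition {n r : ℕ}
    (Y W : Fin n → EuclideanSpace ℝ (Fin r)) (u : EuclideanSpace ℝ (Fin r))
    (hY : ∀ i, ‖Y i‖ = 1)
    (hdecomp : ∀ i, Y i = u + W i)
    (hmean : ∑ i, W i = 0) :
    ∃ Qt : Matrix (Fin n) (Fin n) ℝ,
      (∀ i j, (1 / 4) * ‖Y i - Y j‖ ^ 4 =
          (1 / 4) * ‖W i‖ ^ 4 + (1 / 4) * ‖W j‖ ^ 4 + Qt i j) ∧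
      nuclearNorm Qt ≤ 14 * ∑ i, ‖W i‖ ^ 2 := by
  classical
  by_cases hWz : ∀ i, W i = 0
  · refine ⟨0, ?_, ?_⟩
    · intro i j
      have hij : Y i = Y j := by rw [hdecomp i, hdecomp j, hWz i, hWz j]
      rw [hij, hWz i, hWz j]
      simp
    · have h0 : (0 : Matrix (Fin n) (Fin n) ℝ) =
          (0 : Matrix (Fin n) Unit ℝ) * (0 : Matrix (Fin n) Unit ℝ).transpose := by
        simp
      rw [h0]
      refine le_trans (nuclearNorm_factor_le 0 0) ?_
      simp [hWz]
  · obtain ⟨i0, hi0⟩ := not_forall.mp hWz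
    have hn : 0 < n := i0.pos
    have hu1 : ‖u‖ ≤ 1 := by
      have hsum : ∑ i, Y i = (n : ℕ) • u := by
        simp_rw [hdecomp]
        rw [Finset.sum_add_distrib, hmean, add_zero, Finset.sum_const, Finset.card_univ,
          Fintype.card_fin]
      have h1 : ‖∑ i, Y i‖ ≤ (n : ℝ) := by
        refine le_trans (norm_sum_le _ _) ?_
        simp [hY]
      rw [hsum] at h1
      have h2 : ‖(n : ℕ) • u‖ = (n : ℝ) * ‖u‖ := by
        rw [← Nat.cast_smul_eq_nsmul ℝ, norm_smul]
        simp
      rw [h2] at h1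
      have hn' : (0 : ℝ) < n := by exact_mod_cast hn
      nlinarith
    have hWb : ∀ i, ‖W i‖ ≤ 2 := by
      intro i
      have h1 : W i = Y i - u := by rw [hdecomp i]; abel
      calc ‖W i‖ = ‖Y i - u‖ := by rw [h1]
        _ ≤ ‖Y i‖ + ‖u‖ := norm_sub_le _ _
        _ ≤ 2 := by rw [hY i]; linarith
    classical
    set b : Fin n → ℝ := fun i => ‖W i‖ ^ 2 with hbdef
    have hbi : ∀ i, b i = ‖W i‖ ^ 2 := fun i => rfl
    have hb0 : ∀ i, 0 ≤ b i := fun i => sq_nonneg _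
    have hb4 : ∀ i, b i ≤ 4 := by
      intro i
      have := hWb i
      have := norm_nonneg (W i)
      rw [hbi]; nlinarith
    set s : ℝ := ∑ i, b i with hsdef
    have hW0 : 0 < ‖W i0‖ := norm_pos_iff.mpr hi0
    have hs0 : 0 < s := by
      rw [hsdef]
      refine Finset.sum_pos' (fun i _ => hb0 i) ⟨i0, Finset.mem_univ _, ?_⟩
      rw [hbi]
      positivity
    set d : ℝ := Real.sqrt (∑ i, b i ^ 3) with hddef
    have hcube0 : 0 < ∑ i, b i ^ 3 := by
      refine Finset.sum_pos' (fun i _ => by positivity) ⟨i0, Finset.mem_univ _, ?_⟩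
      have h : 0 < b i0 := by rw [hbi]; positivity
      positivity
    have hd0 : 0 < d := Real.sqrt_pos.mpr hcube0
    have hd2 : d ^ 2 = ∑ i, b i ^ 3 := Real.sq_sqrt hcube0.le
    set rs : ℝ := Real.sqrt s with hrsdef
    have hrs0 : 0 < rs := Real.sqrt_pos.mpr hs0
    have hrs2 : rs ^ 2 = s := Real.sq_sqrt hs0.le
    have hdle : d ≤ 4 * rs := by
      have h1 : ∑ i, b i ^ 3 ≤ 16 * s := by
        rw [hsdef, Finset.mul_sum]
        refine Finset.sum_le_sum fun i _ => ?_
        have h := hb0 i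
        have h4 := hb4 i
        nlinarith [mul_nonneg (mul_nonneg h h) (sub_nonneg.2 h4), mul_nonneg h (sub_nonneg.2 h4)]
      have h16 : (16 : ℝ) * s = (4 * rs) ^ 2 := by nlinarith [hrs2]
      have h4rs : (0:ℝ) ≤ 4 * rs := by linarith
      calc d ≤ Real.sqrt (16 * s) := Real.sqrt_le_sqrt h1
        _ = 4 * rs := by rw [h16]; exact Real.sqrt_sq h4rs
    set t : ℝ := Real.sqrt (rs / d) with htdef
    have ht0 : 0 < t := Real.sqrt_pos.mpr (div_pos hrs0 hd0)
    have ht2 : t ^ 2 = rs / d := Real.sq_sqrt (div_pos hrs0 hd0).le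
    have htt : t * t⁻¹ = 1 := mul_inv_cancel₀ ht0.ne'
    set g : Fin n → Fin n → ℝ := fun i j => (inner ℝ (W i) (W j) : ℝ) with hgdef
    have hg : ∀ i j, g i j = ∑ k, W i k * W j k := fun i j => euclid_inner_eq _ _
    have hbW : ∀ i, ∑ k, (W i k) ^ 2 = b i := fun i => (euclid_norm_sq (W i)).symm
    have hsqrt2 : Real.sqrt 2 * Real.sqrt 2 = 2 := Real.mul_self_sqrt (by norm_num)
    -- matrices
    set A : Matrix (Fin n) (Unit ⊕ Fin r ⊕ Fin r ⊕ Fin r × Fin r) ℝ := fun i c =>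
      Sum.elim (fun _ => b i / Real.sqrt 2)
        (Sum.elim (fun j => -(t * (b i * W i j)))
          (Sum.elim (fun j => t⁻¹ * W i j) (fun p => W i p.1 * W i p.2))) c with hAdef
    set B : Matrix (Fin n) (Unit ⊕ Fin r ⊕ Fin r ⊕ Fin r × Fin r) ℝ := fun i c =>
      Sum.elim (fun _ => b i / Real.sqrt 2)
        (Sum.elim (fun j => t⁻¹ * W i j)
          (Sum.elim (fun j => -(t * (b i * W i j))) (fun p => W i p.1 * W i p.2))) c with hBdef
    have hAB : ∀ i j, (A * B.transpose) i j =
        b i * b j / 2 - b i * g i j - b j * g i j + g i j ^ 2 := by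
      intro i j
      rw [Matrix.mul_apply]
      simp_rw [Matrix.transpose_apply]
      rw [show ∑ c, A i c * B j c =
          (∑ _ : Unit, (b i / Real.sqrt 2) * (b j / Real.sqrt 2)) +
          ((∑ k, (-(t * (b i * W i k))) * (t⁻¹ * W j k)) +
           ((∑ k, (t⁻¹ * W i k) * (-(t * (b j * W j k)))) +
            (∑ p : Fin r × Fin r, (W i p.1 * W i p.2) * (W j p.1 * W j p.2)))) from by
        rw [Fintype.sum_sum_type, Fintype.sum_sum_type, Fintype.sum_sum_type]
        rfl]
      have h1 : (∑ _ : Unit, (b i / Real.sqrt 2) * (b j / Real.sqrt 2)) = b i * b j / 2 := by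
        rw [Finset.sum_const, Finset.card_univ]
        simp only [Fintype.card_unit, one_smul]
        rw [div_mul_div_comm, hsqrt2]
      have h2 : (∑ k, (-(t * (b i * W i k))) * (t⁻¹ * W j k)) = -(b i * g i j) := by
        rw [hg]
        calc ∑ k, (-(t * (b i * W i k))) * (t⁻¹ * W j k)
            = ∑ k, -((t * t⁻¹) * (b i * (W i k * W j k))) :=
              Finset.sum_congr rfl fun k _ => by ring
          _ = -(b i * ∑ k, W i k * W j k) := by
              rw [htt]
              simp [Finset.mul_sum]
      have h3 : (∑ k, (t⁻¹ * W i k) * (-(t * (b j * W j k)))) = -(b j * g i j) := by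
        rw [hg]
        calc ∑ k, (t⁻¹ * W i k) * (-(t * (b j * W j k)))
            = ∑ k, -((t * t⁻¹) * (b j * (W i k * W j k))) :=
              Finset.sum_congr rfl fun k _ => by ring
          _ = -(b j * ∑ k, W i k * W j k) := by
              rw [htt]
              simp [Finset.mul_sum]
      have h4 : (∑ p : Fin r × Fin r, (W i p.1 * W i p.2) * (W j p.1 * W j p.2)) = g i j ^ 2 := by
        rw [hg, sq, Finset.sum_mul_sum, Fintype.sum_prod_type]
        refine Finset.sum_congr rfl fun k _ => Finset.sum_congr rfl fun l _ => by ring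
      rw [h1, h2, h3, h4]
      ring
    -- Frobenius norms
    have hperA : ∀ i, ∑ c, A i c ^ 2 = b i ^ 2 / 2 + t ^ 2 * b i ^ 3 + t⁻¹ ^ 2 * b i + b i ^ 2 := by
      intro i
      rw [show ∑ c, A i c ^ 2 =
          (∑ _ : Unit, (b i / Real.sqrt 2) ^ 2) +
          ((∑ k, (-(t * (b i * W i k))) ^ 2) +
           ((∑ k, (t⁻¹ * W i k) ^ 2) +
            (∑ p : Fin r × Fin r, (W i p.1 * W i p.2) ^ 2))) from by
        rw [Fintype.sum_sum_type, Fintype.sum_sum_type, Fintype.sum_sum_type]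
        rfl]
      have h1 : (∑ _ : Unit, (b i / Real.sqrt 2) ^ 2) = b i ^ 2 / 2 := by
        rw [Finset.sum_const, Finset.card_univ]
        simp only [Fintype.card_unit, one_smul]
        rw [div_pow, Real.sq_sqrt (by norm_num : (0:ℝ) ≤ 2)]
      have h2 : (∑ k, (-(t * (b i * W i k))) ^ 2) = t ^ 2 * b i ^ 3 := by
        calc ∑ k, (-(t * (b i * W i k))) ^ 2
            = ∑ k, (t ^ 2 * b i ^ 2) * (W i k) ^ 2 := Finset.sum_congr rfl fun k _ => by ring
          _ = (t ^ 2 * b i ^ 2) * (∑ k, (W i k) ^ 2) := by rw [← Finset.mul_sum]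
          _ = t ^ 2 * b i ^ 3 := by rw [hbW]; ring
      have h3 : (∑ k, (t⁻¹ * W i k) ^ 2) = t⁻¹ ^ 2 * b i := by
        calc ∑ k, (t⁻¹ * W i k) ^ 2
            = ∑ k, t⁻¹ ^ 2 * (W i k) ^ 2 := Finset.sum_congr rfl fun k _ => by ring
          _ = t⁻¹ ^ 2 * (∑ k, (W i k) ^ 2) := by rw [← Finset.mul_sum]
          _ = t⁻¹ ^ 2 * b i := by rw [hbW]
      have h4 : (∑ p : Fin r × Fin r, (W i p.1 * W i p.2) ^ 2) = b i ^ 2 := by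
        calc ∑ p : Fin r × Fin r, (W i p.1 * W i p.2) ^ 2
            = ∑ k, ∑ l, (W i k) ^ 2 * (W i l) ^ 2 := by
              rw [Fintype.sum_prod_type]
              exact Finset.sum_congr rfl fun k _ => Finset.sum_congr rfl fun l _ => by ring
          _ = (∑ k, (W i k) ^ 2) * (∑ l, (W i l) ^ 2) := (Finset.sum_mul_sum _ _ _ _).symm
          _ = b i ^ 2 := by rw [hbW]; ring
      rw [h1, h2, h3, h4]
      ring
    have hperB : ∀ i, ∑ c, B i c ^ 2 = b i ^ 2 / 2 + t ^ 2 * b i ^ 3 + t⁻¹ ^ 2 * b i + b i ^ 2 := by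
      intro i
      rw [show ∑ c, B i c ^ 2 =
          (∑ _ : Unit, (b i / Real.sqrt 2) ^ 2) +
          ((∑ k, (t⁻¹ * W i k) ^ 2) +
           ((∑ k, (-(t * (b i * W i k))) ^ 2) +
            (∑ p : Fin r × Fin r, (W i p.1 * W i p.2) ^ 2))) from by
        rw [Fintype.sum_sum_type, Fintype.sum_sum_type, Fintype.sum_sum_type]
        rfl]
      have h1 : (∑ _ : Unit, (b i / Real.sqrt 2) ^ 2) = b i ^ 2 / 2 := by
        rw [Finset.sum_const, Finset.card_univ]
        simp only [Fintype.card_unit, one_smul]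
        rw [div_pow, Real.sq_sqrt (by norm_num : (0:ℝ) ≤ 2)]
      have h2 : (∑ k, (-(t * (b i * W i k))) ^ 2) = t ^ 2 * b i ^ 3 := by
        calc ∑ k, (-(t * (b i * W i k))) ^ 2
            = ∑ k, (t ^ 2 * b i ^ 2) * (W i k) ^ 2 := Finset.sum_congr rfl fun k _ => by ring
          _ = (t ^ 2 * b i ^ 2) * (∑ k, (W i k) ^ 2) := by rw [← Finset.mul_sum]
          _ = t ^ 2 * b i ^ 3 := by rw [hbW]; ring
      have h3 : (∑ k, (t⁻¹ * W i k) ^ 2) = t⁻¹ ^ 2 * b i := by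
        calc ∑ k, (t⁻¹ * W i k) ^ 2
            = ∑ k, t⁻¹ ^ 2 * (W i k) ^ 2 := Finset.sum_congr rfl fun k _ => by ring
          _ = t⁻¹ ^ 2 * (∑ k, (W i k) ^ 2) := by rw [← Finset.mul_sum]
          _ = t⁻¹ ^ 2 * b i := by rw [hbW]
      have h4 : (∑ p : Fin r × Fin r, (W i p.1 * W i p.2) ^ 2) = b i ^ 2 := by
        calc ∑ p : Fin r × Fin r, (W i p.1 * W i p.2) ^ 2
            = ∑ k, ∑ l, (W i k) ^ 2 * (W i l) ^ 2 := by
              rw [Fintype.sum_prod_type]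
              exact Finset.sum_congr rfl fun k _ => Finset.sum_congr rfl fun l _ => by ring
          _ = (∑ k, (W i k) ^ 2) * (∑ l, (W i l) ^ 2) := (Finset.sum_mul_sum _ _ _ _).symm
          _ = b i ^ 2 := by rw [hbW]; ring
      rw [h1, h2, h3, h4]
      ring
    have hbound : ∑ i, (b i ^ 2 / 2 + t ^ 2 * b i ^ 3 + t⁻¹ ^ 2 * b i + b i ^ 2) ≤ 14 * s := by
      have hsum : ∑ i, (b i ^ 2 / 2 + t ^ 2 * b i ^ 3 + t⁻¹ ^ 2 * b i + b i ^ 2) =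
          (3 / 2) * (∑ i, b i ^ 2) + t ^ 2 * (∑ i, b i ^ 3) + t⁻¹ ^ 2 * s := by
        rw [hsdef, Finset.mul_sum, Finset.mul_sum, Finset.mul_sum,
          ← Finset.sum_add_distrib, ← Finset.sum_add_distrib]
        exact Finset.sum_congr rfl fun i _ => by ring
      rw [hsum]
      have e1 : t ^ 2 * (∑ i, b i ^ 3) = rs * d := by
        rw [← hd2, ht2]
        field_simp
      have e2 : t⁻¹ ^ 2 * s = d * rs := by
        rw [inv_pow, ht2, ← hrs2]
        field_simp
      rw [e1, e2]
      have hsum2 : ∑ i, b i ^ 2 ≤ 4 * s := by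
        rw [hsdef, Finset.mul_sum]
        refine Finset.sum_le_sum fun i _ => ?_
        have h := hb0 i
        have h4 := hb4 i
        nlinarith
      have hrd : rs * d ≤ 4 * s := by nlinarith [hrs2, hrs0, hdle]
      linarith
    refine ⟨A * B.transpose, ?_, ?_⟩
    · intro i j
      have hYW : Y i - Y j = W i - W j := by rw [hdecomp i, hdecomp j]; abel
      have hnsq : ‖W i - W j‖ ^ 2 = b i - 2 * g i j + b j := by
        rw [norm_sub_sq_real]
      calc (1 / 4) * ‖Y i - Y j‖ ^ 4 = (1 / 4) * (‖W i - W j‖ ^ 2) ^ 2 := by rw [hYW]; ring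
        _ = (1 / 4) * (b i - 2 * g i j + b j) ^ 2 := by rw [hnsq]
        _ = (1 / 4) * (b i) ^ 2 + (1 / 4) * (b j) ^ 2 +
            (b i * b j / 2 - b i * g i j - b j * g i j + g i j ^ 2) := by ring
        _ = (1 / 4) * ‖W i‖ ^ 4 + (1 / 4) * ‖W j‖ ^ 4 + (A * B.transpose) i j := by
            rw [hAB i j, hbi i, hbi j]
            ring
    · refine le_trans (nuclearNorm_factor_le A B) ?_
      have hAfro : ∑ i, ∑ c, A i c ^ 2 ≤ 14 * s := by
        rw [show (∑ i, ∑ c, A i c ^ 2) =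
            ∑ i, (b i ^ 2 / 2 + t ^ 2 * b i ^ 3 + t⁻¹ ^ 2 * b i + b i ^ 2) from
          Finset.sum_congr rfl fun i _ => hperA i]
        exact hbound
      have hBfro : ∑ i, ∑ c, B i c ^ 2 ≤ 14 * s := by
        rw [show (∑ i, ∑ c, B i c ^ 2) =
            ∑ i, (b i ^ 2 / 2 + t ^ 2 * b i ^ 3 + t⁻¹ ^ 2 * b i + b i ^ 2) from
          Finset.sum_congr rfl fun i _ => hperB i]
        exact hbound
      have hfin : Real.sqrt (∑ i, ∑ c, A i c ^ 2) * Real.sqrt (∑ i, ∑ c, B i c ^ 2) ≤ 14 * s :=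
        calc Real.sqrt (∑ i, ∑ c, A i c ^ 2) * Real.sqrt (∑ i, ∑ c, B i c ^ 2)
            ≤ Real.sqrt (14 * s) * Real.sqrt (14 * s) :=
              mul_le_mul (Real.sqrt_le_sqrt hAfro) (Real.sqrt_le_sqrt hBfro)
                (Real.sqrt_nonneg _) (Real.sqrt_nonneg _)
          _ = 14 * s := Real.mul_self_sqrt (by linarith)
      exact hfin
end

section
/- Let z ∈ {±1}ⁿ and let C, Δ⁺ be symmetric n×n matrices with Δ⁺_{ij}·zᵢ·zⱼ ≥ 0 for all i,j. If z is a maximizer of x ↦ ⟨C, xxᵀ⟩ over x ∈ {±1}ⁿ, then z is also a maximizer of x ↦ ⟨C + Δ⁺, xxᵀ⟩ over x ∈ {±1}ⁿ. Moreover, if z is the unique maximizer up to global sign for C, it remains so for C + Δ⁺. -/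
/-!
Write `q_A(x) = ∑ᵢ ∑ⱼ A i j xᵢ xⱼ`, so that `q_{C+Δ} = q_C + q_Δ`. For sign vectors `x` every term
`Δ i j xᵢ xⱼ` has absolute value `|Δ i j|`, and the hypothesis on `Δ` says that at `z` each term
attains it. Hence `z` maximizes `q_Δ`, so adding `q_Δ` keeps `z` a maximizer, and a tie
`q_{C+Δ}(x) = q_{C+Δ}(z)` forces the tie `q_C(x) = q_C(z)`.
-/

lemma sum_sum_add_apply_mul {R ι : Type*} [NonUnitalNonAssocSemiring R] [Fintype ι]
    (A B : Matrix ι ι R) (x : ι → R) :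
    ∑ i, ∑ j, (A + B) i j * (x i * x j) =
      ∑ i, ∑ j, A i j * (x i * x j) + ∑ i, ∑ j, B i j * (x i * x j) := by
  simp only [Matrix.add_apply, add_mul, Finset.sum_add_distrib]

variable {R : Type*} [Ring R] [LinearOrder R] [IsStrictOrderedRing R]

lemma abs_eq_one_of_eq_one_or_eq_neg_one {a : R} (ha : a = 1 ∨ a = -1) : |a| = 1 := by
  rcases ha with rfl | rfl <;> simp

lemma mul_le_mul_of_nonneg_of_abs_eq {d s t : R} (hs : 0 ≤ d * s) (hst : |t| = |s|) :
    d * t ≤ d * s :=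
  calc d * t ≤ |d * t| := le_abs_self _
    _ = |d * s| := by rw [abs_mul, abs_mul, hst]
    _ = d * s := abs_of_nonneg hs

section SignVectors

variable {ι : Type*} [Fintype ι] {x z : ι → R}
  (hx : ∀ i, x i = 1 ∨ x i = -1) (hz : ∀ i, z i = 1 ∨ z i = -1)
include hx hz

lemma sum_sum_mul_le_of_signs {Δ : Matrix ι ι R} (hΔ : ∀ i j, Δ i j * z i * z j ≥ 0) :
    ∑ i, ∑ j, Δ i j * (x i * x j) ≤ ∑ i, ∑ j, Δ i j * (z i * z j) := by
  refine Finset.sum_le_sum fun i _ => Finset.sum_le_sum fun j _ => ?_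
  refine mul_le_mul_of_nonneg_of_abs_eq (by simpa [mul_assoc] using hΔ i j) ?_
  simp only [abs_mul, abs_eq_one_of_eq_one_or_eq_neg_one (hx _),
    abs_eq_one_of_eq_one_or_eq_neg_one (hz _)]

variable {C Δ : Matrix ι ι R} (hΔ : ∀ i j, Δ i j * z i * z j ≥ 0)
  (hC : ∑ i, ∑ j, C i j * (x i * x j) ≤ ∑ i, ∑ j, C i j * (z i * z j))
include hΔ hC

lemma sum_sum_add_mul_le_of_signs :
    ∑ i, ∑ j, (C + Δ) i j * (x i * x j) ≤ ∑ i, ∑ j, (C + Δ) i j * (z i * z j) := by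
  rw [sum_sum_add_apply_mul, sum_sum_add_apply_mul]
  exact add_le_add hC (sum_sum_mul_le_of_signs hx hz hΔ)

lemma sum_sum_mul_eq_of_add_eq_of_signs
    (heq : ∑ i, ∑ j, (C + Δ) i j * (x i * x j) = ∑ i, ∑ j, (C + Δ) i j * (z i * z j)) :
    ∑ i, ∑ j, C i j * (x i * x j) = ∑ i, ∑ j, C i j * (z i * z j) := by
  rw [sum_sum_add_apply_mul, sum_sum_add_apply_mul] at heq
  exact le_antisymm hC <| le_of_add_le_add_right <|
    heq.symm.le.trans (add_le_add le_rfl (sum_sum_mul_le_of_signs hx hz hΔ))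

end SignVectors

theorem monotone_adversary_robust_general {n : ℕ} (z : Fin n → ℝ)
    (hz : ∀ i, z i = 1 ∨ z i = -1)
    (C Δ : Matrix (Fin n) (Fin n) ℝ)
    (hmono : ∀ i j, Δ i j * z i * z j ≥ 0) :
    ((∀ x : Fin n → ℝ, (∀ i, x i = 1 ∨ x i = -1) →
        (∑ i, ∑ j, C i j * (x i * x j)) ≤ ∑ i, ∑ j, C i j * (z i * z j)) →
      ∀ x : Fin n → ℝ, (∀ i, x i = 1 ∨ x i = -1) →
        (∑ i, ∑ j, (C + Δ) i j * (x i * x j)) ≤ ∑ i, ∑ j, (C + Δ) i j * (z i * z j)) ∧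
    (((∀ x : Fin n → ℝ, (∀ i, x i = 1 ∨ x i = -1) →
          (∑ i, ∑ j, C i j * (x i * x j)) ≤ ∑ i, ∑ j, C i j * (z i * z j)) ∧
        (∀ x : Fin n → ℝ, (∀ i, x i = 1 ∨ x i = -1) →
          (∑ i, ∑ j, C i j * (x i * x j)) = (∑ i, ∑ j, C i j * (z i * z j)) →
          x = z ∨ x = -z)) →
      (∀ x : Fin n → ℝ, (∀ i, x i = 1 ∨ x i = -1) →
        (∑ i, ∑ j, (C + Δ) i j * (x i * x j)) ≤ ∑ i, ∑ j, (C + Δ) i j * (z i * z j)) ∧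
      (∀ x : Fin n → ℝ, (∀ i, x i = 1 ∨ x i = -1) →
        (∑ i, ∑ j, (C + Δ) i j * (x i * x j)) = (∑ i, ∑ j, (C + Δ) i j * (z i * z j)) →
        x = z ∨ x = -z)) := by
  refine ⟨fun hmax x hx => sum_sum_add_mul_le_of_signs hx hz hmono (hmax x hx),
    fun ⟨hmax, huniq⟩ => ⟨fun x hx => sum_sum_add_mul_le_of_signs hx hz hmono (hmax x hx),
      fun x hx heq => huniq x hx (sum_sum_mul_eq_of_add_eq_of_signs hx hz hmono (hmax x hx) heq)⟩⟩

theorem monotone_adversary_robust {n : ℕ} (z : Fin n → ℝ)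
    (hz : ∀ i, z i = 1 ∨ z i = -1)
    (C Δ : Matrix (Fin n) (Fin n) ℝ) (hC : C.IsSymm) (hΔ : Δ.IsSymm)
    (hmono : ∀ i j, Δ i j * z i * z j ≥ 0) :
    ((∀ x : Fin n → ℝ, (∀ i, x i = 1 ∨ x i = -1) →
        (∑ i, ∑ j, C i j * (x i * x j)) ≤ ∑ i, ∑ j, C i j * (z i * z j)) →
      ∀ x : Fin n → ℝ, (∀ i, x i = 1 ∨ x i = -1) →
        (∑ i, ∑ j, (C + Δ) i j * (x i * x j)) ≤ ∑ i, ∑ j, (C + Δ) i j * (z i * z j)) ∧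
    (((∀ x : Fin n → ℝ, (∀ i, x i = 1 ∨ x i = -1) →
          (∑ i, ∑ j, C i j * (x i * x j)) ≤ ∑ i, ∑ j, C i j * (z i * z j)) ∧
        (∀ x : Fin n → ℝ, (∀ i, x i = 1 ∨ x i = -1) →
          (∑ i, ∑ j, C i j * (x i * x j)) = (∑ i, ∑ j, C i j * (z i * z j)) →
          x = z ∨ x = -z)) →
      (∀ x : Fin n → ℝ, (∀ i, x i = 1 ∨ x i = -1) →
        (∑ i, ∑ j, (C + Δ) i j * (x i * x j)) ≤ ∑ i, ∑ j, (C + Δ) i j * (z i * z j)) ∧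
      (∀ x : Fin n → ℝ, (∀ i, x i = 1 ∨ x i = -1) →
        (∑ i, ∑ j, (C + Δ) i j * (x i * x j)) = (∑ i, ∑ j, (C + Δ) i j * (z i * z j)) →
        x = z ∨ x = -z)) :=
  monotone_adversary_robust_general z hz C Δ hmono
end
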